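/- For fixed α with 0 ≤ α < 1, the function β ↦ f_A(α,β) is symmetric about β = 1/2 and increasing up to 1/2: (i) f_A(α,β) = f_A(α,1−β) for all β with α/2 ≤ β ≤ 1−α/2; (ii) if α/2 ≤ β₁ ≤ β₂ ≤ 1/2 then f_A(α,β₁) ≤ f_A(α,β₂). -/

import Mathlib

/-- Binary entropy function (base-2 logs), with the convention `0 * log 0 = 0`. -/
noncomputable def binEnt (x : ℝ) : ℝ :=
  -(x * Real.logb 2 x) - (1 - x) * Real.logb 2 (1 - x)

/-- The spectral shape exponent of the accumulator:
`f_A(α,β) = α − h(β) + (1−α)·h((β−α/2)/(1−α))`. -/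
noncomputable def fA (α β : ℝ) : ℝ :=
  α - binEnt β + (1 - α) * binEnt ((β - α / 2) / (1 - α))

/-- The spectral shape exponent of the discrete derivative:
`f_D(α,β) = (1−α)·h(β/(2(1−α))) + α·h(β/(2α)) − h(α)`. -/
noncomputable def fD (α β : ℝ) : ℝ :=
  (1 - α) * binEnt (β / (2 * (1 - α))) + α * binEnt (β / (2 * α)) - binEnt α

/-!
Writing `t(β) = (β - α/2)/(1 - α)`, we have `t(1 - β) = 1 - t(β)`, so the symmetry `h(1 - x) = h(x)`
of binary entropy gives the symmetry of `f_A`. For monotonicity, `ln 2 · ∂f_A/∂β` is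
`h'(t(β)) - h'(β)` with `h'(x) = log(1 - x) - log x` (natural-log entropy), and `h'` is
antitone; for `β ≤ 1/2` we have `t(β) ≤ β`, so this derivative is nonnegative.
-/

open Real Set

noncomputable def fAScaled (α β : ℝ) : ℝ :=
  (1 - α) * binEntropy ((β - α / 2) / (1 - α)) - binEntropy β

lemma binEnt_eq_binEntropy_div (x : ℝ) : binEnt x = binEntropy x / log 2 := by
  simp only [binEnt, binEntropy, logb, log_inv]
  ring

lemma binEnt_one_sub (x : ℝ) : binEnt (1 - x) = binEnt x := by
  simp [binEnt_eq_binEntropy_div]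

lemma fA_eq_add_fAScaled_div (α β : ℝ) : fA α β = α + fAScaled α β / log 2 := by
  simp only [fA, fAScaled, binEnt_eq_binEntropy_div]
  ring

lemma fA_one_sub (α β : ℝ) (hα : α ≠ 1) : fA α (1 - β) = fA α β := by
  have harg : (1 - β - α / 2) / (1 - α) = 1 - (β - α / 2) / (1 - α) := by
    field_simp [sub_ne_zero.2 hα.symm]
    ring
  simp only [fA, harg, binEnt_one_sub]

lemma log_one_sub_sub_log_le {x y : ℝ} (hx : 0 < x) (hxy : x ≤ y) (hy : y < 1) :
    log (1 - y) - log y ≤ log (1 - x) - log x := by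
  have h1 : log (1 - y) ≤ log (1 - x) := log_le_log (by linarith) (by linarith)
  have h2 : log x ≤ log y := log_le_log hx hxy
  linarith

lemma sub_half_div_one_sub_le {α β : ℝ} (hα0 : 0 ≤ α) (hα1 : α < 1) (hβ : β ≤ 1 / 2) :
    (β - α / 2) / (1 - α) ≤ β := by
  rw [div_le_iff₀ (by linarith)]
  nlinarith

lemma hasDerivAt_fAScaled {α β : ℝ} (hα : α ≠ 1) (ht0 : (β - α / 2) / (1 - α) ≠ 0)
    (ht1 : (β - α / 2) / (1 - α) ≠ 1) (hβ0 : β ≠ 0) (hβ1 : β ≠ 1) :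
    HasDerivAt (fAScaled α)
      ((log (1 - (β - α / 2) / (1 - α)) - log ((β - α / 2) / (1 - α)))
        - (log (1 - β) - log β)) β := by
  have hinner : HasDerivAt (fun b : ℝ => (b - α / 2) / (1 - α)) (1 - α)⁻¹ β := by
    simpa using ((hasDerivAt_id β).sub_const (α / 2)).div_const (1 - α)
  have h := (((hasDerivAt_binEntropy ht0 ht1).comp β hinner).const_mul (1 - α)).sub
    (hasDerivAt_binEntropy hβ0 hβ1)
  rwa [mul_left_comm, mul_inv_cancel₀ (sub_ne_zero.2 hα.symm), mul_one] at h

lemma fAScaled_monotoneOn {α : ℝ} (hα0 : 0 ≤ α) (hα1 : α < 1) :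
    MonotoneOn (fAScaled α) (Icc (α / 2) (1 / 2)) := by
  have key : ∀ β ∈ interior (Icc (α / 2) (1 / 2)), ∃ d, HasDerivAt (fAScaled α) d β ∧ 0 ≤ d := by
    intro β hβ
    rw [interior_Icc] at hβ
    obtain ⟨hβl, hβr⟩ := hβ
    have ht0 : 0 < (β - α / 2) / (1 - α) := div_pos (by linarith) (by linarith)
    have htβ := sub_half_div_one_sub_le hα0 hα1 hβr.le
    exact ⟨_, hasDerivAt_fAScaled hα1.ne ht0.ne' (by linarith) (by linarith) (by linarith),
      sub_nonneg.2 (log_one_sub_sub_log_le ht0 htβ (by linarith))⟩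
  refine monotoneOn_of_deriv_nonneg (convex_Icc _ _) (by unfold fAScaled; fun_prop)
    (fun β hβ => ?_) (fun β hβ => ?_) <;> obtain ⟨d, hd, hd0⟩ := key β hβ
  · exact hd.differentiableAt.differentiableWithinAt
  · exact hd.deriv ▸ hd0

lemma fA_monotoneOn {α : ℝ} (hα0 : 0 ≤ α) (hα1 : α < 1) :
    MonotoneOn (fA α) (Icc (α / 2) (1 / 2)) := by
  intro x hx y hy hxy
  rw [fA_eq_add_fAScaled_div, fA_eq_add_fAScaled_div]
  gcongr
  exact fAScaled_monotoneOn hα0 hα1 hx hy hxy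

/-- `β ↦ f_A(α,β)` is symmetric about `β = 1/2` and increasing up to `1/2`. -/
theorem fA_symm_and_mono_right (α : ℝ) (hα0 : 0 ≤ α) (hα1 : α < 1) :
    (∀ β : ℝ, α / 2 ≤ β → β ≤ 1 - α / 2 → fA α β = fA α (1 - β)) ∧
    (∀ β₁ β₂ : ℝ, α / 2 ≤ β₁ → β₁ ≤ β₂ → β₂ ≤ 1 / 2 → fA α β₁ ≤ fA α β₂) :=
  ⟨fun β _ _ => (fA_one_sub α β hα1.ne).symm, fun _ _ h₁ h₁₂ h₂ =>
    fA_monotoneOn hα0 hα1 ⟨h₁, h₁₂.trans h₂⟩ ⟨h₁.trans h₁₂, h₂⟩ h₁₂⟩
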